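/- Let ν > 1 and let K_ν be the modified Bessel function of the second kind of order ν. Then z K_ν′(z)/K_ν(z) tends to −ν as z → 0⁺, where K_ν′ denotes the derivative of K_ν. -/

import Mathlib

/-!
Differentiating under the integral sign and writing
`cosh u * cosh (ν u) = cosh ((ν - 1) u) + sinh (ν u) * sinh u`, an integration by parts of the
second term (against `z sinh u exp (-z cosh u) = d/du (-exp (-z cosh u))`) gives
`z K_ν'(z) = -ν K_ν(z) - z K_{ν-1}(z)`. Since `cosh (μ u)` grows with `|μ|`,
`0 < K_{ν-1} ≤ K_ν` for `ν ≥ 1/2`, so the error term `z K_{ν-1}(z) / K_ν(z)` is squeezed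
between `0` and `z`.
-/

open MeasureTheory Real Filter

noncomputable section

/-- Membership in the class `Φ_d`: continuous on `[0,∞)`, value `1` at `0`, and
`x ↦ φ(‖x‖)` positive definite on `ℝ^d`. -/
def MemPhi (d : ℕ) (φ : ℝ → ℝ) : Prop :=
  ContinuousOn φ (Set.Ici 0) ∧ φ 0 = 1 ∧
    ∀ (N : ℕ) (x : Fin N → EuclideanSpace ℝ (Fin d)) (a : Fin N → ℝ),
      0 ≤ ∑ k : Fin N, ∑ h : Fin N, a k * a h * φ ‖x k - x h‖

/-- The Zastavnyi operator `K_{ε;β₂,β₁}[φ]`. -/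
def zastavnyi (ε β₁ β₂ : ℝ) (φ : ℝ → ℝ) (t : ℝ) : ℝ :=
  (β₂ ^ ε * φ (t / β₂) - β₁ ^ ε * φ (t / β₁)) / (β₂ ^ ε - β₁ ^ ε)

/-- The modified Bessel function of the second kind of order `ν`. -/
def besselK (ν t : ℝ) : ℝ :=
  ∫ u in Set.Ioi (0 : ℝ), Real.exp (-t * Real.cosh u) * Real.cosh (ν * u)

/-- The Matérn function with smoothness parameter `ν`. -/
def matern (ν t : ℝ) : ℝ :=
  if t = 0 then 1 else 2 ^ (1 - ν) / Real.Gamma ν * t ^ ν * besselK ν t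

/-- The Generalized Cauchy function. -/
def genCauchy (δ lam t : ℝ) : ℝ := (1 + t ^ δ) ^ (-(lam / δ))

/-- The Generalized Wendland function. -/
def genWendland (κ μ t : ℝ) : ℝ :=
  if 1 ≤ t then 0
  else if κ = 0 then (1 - t) ^ μ
  else (∫ u in Set.Ioc t 1, u * (u ^ 2 - t ^ 2) ^ (κ - 1) * (1 - u) ^ μ) /
    (Real.Gamma (2 * κ) * Real.Gamma (μ + 1) / Real.Gamma (2 * κ + μ + 1))

/-- The `d`-dimensional radial Fourier transform of a radial function `x ↦ φ(‖x‖)`,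
evaluated at a frequency of norm `z` (taken in the direction of the first coordinate;
the imaginary part vanishes by radial symmetry). -/
def radialFT (d : ℕ) [NeZero d] (φ : ℝ → ℝ) (z : ℝ) : ℝ :=
  (2 * Real.pi) ^ (-(d : ℝ)) *
    ∫ x : EuclideanSpace ℝ (Fin d), Real.cos (z * x 0) * φ ‖x‖

open Set Topology

lemma cosh_le_exp_abs (x : ℝ) : cosh x ≤ exp |x| := by
  rw [← cosh_abs, cosh_eq]
  linarith [exp_le_exp.2 (neg_le_self (abs_nonneg x))]

lemma abs_sinh_le_cosh (x : ℝ) : |sinh x| ≤ cosh x := by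
  rw [abs_sinh, ← cosh_abs]
  exact (sinh_lt_cosh _).le

lemma cosh_mul_le_exp_abs_mul {u : ℝ} (ν : ℝ) (hu : 0 ≤ u) :
    cosh (ν * u) ≤ exp (|ν| * u) := by
  simpa [abs_mul, abs_of_nonneg hu] using cosh_le_exp_abs (ν * u)

lemma abs_sinh_mul_le_exp_abs_mul {u : ℝ} (ν : ℝ) (hu : 0 ≤ u) :
    |sinh (ν * u)| ≤ exp (|ν| * u) :=
  (abs_sinh_le_cosh _).trans (cosh_mul_le_exp_abs_mul ν hu)

/-- Completing the square against `t * cosh u ≥ t * u ^ 2 / 4`. -/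
lemma mul_sub_mul_cosh_le {c t u : ℝ} (ht : 0 < t) (hu : 0 ≤ u) :
    c * u - t * cosh u ≤ (c + 1) ^ 2 / t - u := by
  have hcosh : u ^ 2 / 4 ≤ cosh u := by
    have := pow_div_factorial_le_exp u hu 2
    rw [cosh_eq]
    norm_num at this
    linarith [exp_pos (-u)]
  have key : (c * u + u - t * cosh u) * t ≤ (c + 1) ^ 2 := by
    nlinarith [sq_nonneg (t * u / 2 - (c + 1)), mul_le_mul_of_nonneg_left hcosh (sq_nonneg t)]
  linarith [(le_div_iff₀ ht).2 key]

lemma integrableOn_exp_mul_sub_mul_cosh (c : ℝ) {t : ℝ} (ht : 0 < t) :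
    IntegrableOn (fun u => exp (c * u - t * cosh u)) (Ioi 0) := by
  refine ((exp_neg_integrableOn_Ioi 0 one_pos).const_mul (exp ((c + 1) ^ 2 / t))).mono'
    (by fun_prop) ?_
  filter_upwards [ae_restrict_mem measurableSet_Ioi] with u hu
  rw [norm_of_nonneg (exp_pos _).le, ← exp_add]
  exact exp_le_exp.2 (by linarith [mul_sub_mul_cosh_le (c := c) ht (le_of_lt hu)])

lemma integrableOn_Ioi_of_abs_le_mul_exp {f : ℝ → ℝ} {C c t : ℝ} (hf : Continuous f)
    (ht : 0 < t) (h : ∀ u, 0 < u → |f u| ≤ C * exp (c * u - t * cosh u)) :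
    IntegrableOn f (Ioi 0) := by
  refine ((integrableOn_exp_mul_sub_mul_cosh c ht).const_mul C).mono'
    hf.aestronglyMeasurable ?_
  filter_upwards [ae_restrict_mem measurableSet_Ioi] with u hu
  exact h u hu

lemma integrableOn_besselK_integrand (ν : ℝ) {t : ℝ} (ht : 0 < t) :
    IntegrableOn (fun u => exp (-t * cosh u) * cosh (ν * u)) (Ioi 0) := by
  refine integrableOn_Ioi_of_abs_le_mul_exp (C := 1) (c := |ν|) (by fun_prop) ht fun u hu => ?_
  rw [abs_of_pos (by positivity), one_mul, sub_eq_add_neg, exp_add, ← neg_mul, mul_comm]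
  gcongr
  exact cosh_mul_le_exp_abs_mul ν hu.le

lemma besselK_pos (ν : ℝ) {t : ℝ} (ht : 0 < t) : 0 < besselK ν t := by
  have hpos : ∀ u, 0 < exp (-t * cosh u) * cosh (ν * u) := fun u => by positivity
  rw [besselK, setIntegral_pos_iff_support_of_nonneg_ae (ae_of_all _ fun u => (hpos u).le)
    (integrableOn_besselK_integrand ν ht), Function.support_eq_univ fun u => (hpos u).ne',
    univ_inter]
  simp

lemma besselK_le_besselK {μ ν t : ℝ} (h : |μ| ≤ |ν|) (ht : 0 < t) :
    besselK μ t ≤ besselK ν t := by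
  refine setIntegral_mono_on (integrableOn_besselK_integrand μ ht)
    (integrableOn_besselK_integrand ν ht) measurableSet_Ioi fun u hu => ?_
  gcongr
  rw [cosh_le_cosh, abs_mul, abs_mul]
  gcongr

lemma hasDerivAt_besselK (ν : ℝ) {z : ℝ} (hz : 0 < z) :
    HasDerivAt (besselK ν)
      (-∫ u in Ioi 0, cosh u * (exp (-z * cosh u) * cosh (ν * u))) z := by
  have hbound : ∀ᵐ u ∂volume.restrict (Ioi 0), ∀ x ∈ Metric.ball z (z / 2),
      ‖-(cosh u * (exp (-x * cosh u) * cosh (ν * u)))‖ ≤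
        exp ((|ν| + 1) * u - z / 2 * cosh u) := by
    filter_upwards [ae_restrict_mem measurableSet_Ioi] with u (hu : 0 < u) x hx
    have hxz : z / 2 ≤ x := by
      linarith [(abs_lt.1 (mem_ball_iff_norm.1 hx)).1]
    rw [norm_neg, norm_of_nonneg (by positivity)]
    calc cosh u * (exp (-x * cosh u) * cosh (ν * u))
        ≤ exp u * (exp (-(z / 2) * cosh u) * exp (|ν| * u)) := by
          gcongr
          · simpa [abs_of_pos hu] using cosh_le_exp_abs u
          · exact cosh_mul_le_exp_abs_mul ν hu.le
      _ = exp ((|ν| + 1) * u - z / 2 * cosh u) := by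
          rw [← exp_add, ← exp_add]
          ring_nf
  have hderiv : ∀ᵐ u ∂volume.restrict (Ioi 0), ∀ x ∈ Metric.ball z (z / 2),
      HasDerivAt (fun t => exp (-t * cosh u) * cosh (ν * u))
        (-(cosh u * (exp (-x * cosh u) * cosh (ν * u)))) x := by
    refine ae_of_all _ fun u x _ => ?_
    refine (((hasDerivAt_neg x).mul_const (cosh u)).exp.mul_const _).congr_deriv ?_
    ring
  have h := (hasDerivAt_integral_of_dominated_loc_of_deriv_le
    (F := fun t u => exp (-t * cosh u) * cosh (ν * u))
    (Metric.ball_mem_nhds z (half_pos hz))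
    (Eventually.of_forall fun x => Continuous.aestronglyMeasurable (by fun_prop))
    (integrableOn_besselK_integrand ν hz) (Continuous.aestronglyMeasurable (by fun_prop))
    hbound (integrableOn_exp_mul_sub_mul_cosh _ (half_pos hz)) hderiv).2
  rwa [integral_neg] at h

lemma integrableOn_sinh_mul_sinh_mul_exp (ν : ℝ) {z : ℝ} (hz : 0 < z) :
    IntegrableOn (fun u => sinh (ν * u) * sinh u * exp (-z * cosh u)) (Ioi 0) := by
  refine integrableOn_Ioi_of_abs_le_mul_exp (C := 1) (c := |ν| + 1) (by fun_prop) hz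
    fun u hu => ?_
  have hsinh_u : |sinh u| ≤ exp u := by
    simpa [abs_of_pos hu] using abs_sinh_mul_le_exp_abs_mul 1 hu.le
  rw [abs_mul, abs_mul, abs_of_pos (exp_pos _)]
  calc |sinh (ν * u)| * |sinh u| * exp (-z * cosh u)
      ≤ exp (|ν| * u) * exp u * exp (-z * cosh u) := by
        gcongr
        exact abs_sinh_mul_le_exp_abs_mul ν hu.le
    _ = 1 * exp ((|ν| + 1) * u - z * cosh u) := by
        rw [← exp_add, ← exp_add]
        ring_nf

lemma mul_integral_sinh_mul_sinh_mul_exp (ν : ℝ) {z : ℝ} (hz : 0 < z) :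
    z * ∫ u in Ioi 0, sinh (ν * u) * sinh u * exp (-z * cosh u) = ν * besselK ν z := by
  set f : ℝ → ℝ := fun u => sinh (ν * u)
  set f' : ℝ → ℝ := fun u => ν * cosh (ν * u)
  set g : ℝ → ℝ := fun u => -exp (-z * cosh u)
  set g' : ℝ → ℝ := fun u => z * sinh u * exp (-z * cosh u)
  have hf : ∀ u, HasDerivAt f (f' u) u := fun u =>
    ((hasDerivAt_id u).const_mul ν).sinh.congr_deriv (by simp [f']; ring)
  have hg : ∀ u, HasDerivAt g (g' u) u := fun u =>
    ((hasDerivAt_cosh u).const_mul (-z)).exp.neg.congr_deriv (by simp [g']; ring)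
  have hfg' : IntegrableOn (f * g') (Ioi 0) :=
    (IntegrableOn.congr_fun ((integrableOn_sinh_mul_sinh_mul_exp ν hz).const_mul z)
      (fun u _ => by simp only [f, g', Pi.mul_apply]; ring) measurableSet_Ioi)
  have hf'g : IntegrableOn (f' * g) (Ioi 0) := by
    refine integrableOn_Ioi_of_abs_le_mul_exp (C := |ν|) (c := |ν|) (by fun_prop) hz
      fun u hu => ?_
    calc |f' u * g u| = |ν| * (cosh (ν * u) * exp (-z * cosh u)) := by
          simp only [f', g, abs_mul, abs_neg, abs_of_pos (cosh_pos _), abs_of_pos (exp_pos _)]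
          ring
      _ ≤ |ν| * (exp (|ν| * u) * exp (-z * cosh u)) := by
          gcongr
          exact cosh_mul_le_exp_abs_mul ν hu.le
      _ = |ν| * exp (|ν| * u - z * cosh u) := by
          rw [← exp_add]
          ring_nf
  have hfg : IntegrableOn (f * g) (Ioi 0) := by
    refine integrableOn_Ioi_of_abs_le_mul_exp (C := 1) (c := |ν|) (by fun_prop) hz
      fun u hu => ?_
    calc |f u * g u| = |sinh (ν * u)| * exp (-z * cosh u) := by
          simp only [f, g, abs_mul, abs_neg, abs_of_pos (exp_pos _)]
      _ ≤ exp (|ν| * u) * exp (-z * cosh u) := by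
          gcongr
          exact abs_sinh_mul_le_exp_abs_mul ν hu.le
      _ = 1 * exp (|ν| * u - z * cosh u) := by
          rw [← exp_add]
          ring_nf
  have h_zero : Tendsto (f * g) (𝓝[>] 0) (𝓝 0) := by
    have : Continuous (f * g) := by fun_prop
    simpa [f, g] using (this.tendsto 0).mono_left nhdsWithin_le_nhds
  have h_infty : Tendsto (f * g) atTop (𝓝 0) :=
    tendsto_zero_of_hasDerivAt_of_integrableOn_Ioi (fun u _ => (hf u).mul (hg u))
      (hf'g.add hfg') hfg
  have ibp := integral_Ioi_mul_deriv_eq_deriv_mul (fun u _ => hf u) (fun u _ => hg u) hfg' hf'g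
    h_zero h_infty
  simp only [f, f', g, g', mul_neg, integral_neg, sub_zero, zero_sub, neg_neg] at ibp
  rw [besselK, ← integral_const_mul, ← integral_const_mul]
  convert ibp using 3 with u <;> ring

lemma mul_deriv_besselK (ν : ℝ) {z : ℝ} (hz : 0 < z) :
    z * deriv (besselK ν) z = -ν * besselK ν z - z * besselK (ν - 1) z := by
  have hsplit : ∫ u in Ioi 0, cosh u * (exp (-z * cosh u) * cosh (ν * u)) =
      besselK (ν - 1) z + ∫ u in Ioi 0, sinh (ν * u) * sinh u * exp (-z * cosh u) := by
    rw [besselK, ← integral_add (integrableOn_besselK_integrand _ hz)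
      (integrableOn_sinh_mul_sinh_mul_exp ν hz)]
    refine integral_congr_ae (ae_of_all _ fun u => ?_)
    simp only [sub_mul, one_mul, cosh_sub]
    ring
  rw [(hasDerivAt_besselK ν hz).deriv, hsplit, mul_neg, mul_add,
    mul_integral_sinh_mul_sinh_mul_exp ν hz]
  ring

/-- Lemma 3.1(2): for `ν > 1`, `z K_ν'(z)/K_ν(z) → -ν` as `z → 0⁺`. -/
theorem besselK_logDeriv_tendsto_zero (ν : ℝ) (hν : 1 < ν) :
    Tendsto (fun z : ℝ => z * deriv (besselK ν) z / besselK ν z)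
      (nhdsWithin 0 (Set.Ioi 0)) (nhds (-ν)) := by
  have habs : |ν - 1| ≤ |ν| := by
    rw [abs_of_pos (by linarith), abs_of_pos (by linarith)]
    linarith
  have hratio : Tendsto (fun z => z * (besselK (ν - 1) z / besselK ν z)) (𝓝[>] 0) (𝓝 0) := by
    refine tendsto_of_tendsto_of_tendsto_of_le_of_le' tendsto_const_nhds
      (nhdsWithin_le_nhds : Tendsto id (𝓝[>] (0 : ℝ)) (𝓝 0)) ?_ ?_ <;>
      filter_upwards [self_mem_nhdsWithin] with z (hz : 0 < z)
    · exact mul_nonneg hz.le (div_nonneg (besselK_pos _ hz).le (besselK_pos _ hz).le)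
    · refine mul_le_of_le_one_right hz.le ((div_le_one (besselK_pos _ hz)).2 ?_)
      exact besselK_le_besselK habs hz
  have hlim := (tendsto_const_nhds (x := -ν)).sub hratio
  rw [sub_zero] at hlim
  refine hlim.congr' ?_
  filter_upwards [self_mem_nhdsWithin] with z (hz : 0 < z)
  rw [mul_deriv_besselK ν hz]
  field_simp [(besselK_pos ν hz).ne']
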